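/- arXiv:quant-ph/9603005 — 6 statements merged into one kernel-verified Lean document; each statement's English description precedes it below -/
import Mathlib

section
/- Let P be a well-behaved transition probability space having the two-sphere property. Let Q ⊆ P be an orthoclosed subset admitting a finite basis, and let ρ ∈ P with ρ ∉ Q. Then the set ({ρ} ∪ Q)^⊥⊥ ∩ Q^⊥ is a singleton {σ} for some σ ∈ P (i.e., (ρ ∨ Q) ∧ Q^⊥ is an atom of the lattice of orthoclosed subsets of P). -/
structure TPSpace (P : Type*) where
  p : P → P → ℝ
  nonneg : ∀ ρ σ, 0 ≤ p ρ σ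
  le_one : ∀ ρ σ, p ρ σ ≤ 1
  eq_one_iff : ∀ ρ σ, p ρ σ = 1 ↔ ρ = σ
  zero_iff : ∀ ρ σ, p ρ σ = 0 ↔ p σ ρ = 0

namespace TPSpace

variable {P : Type*} (T : TPSpace P)

/-- A subset is orthogonal if `p` vanishes on all pairs of distinct points of it. -/
def IsOrthoSet (S : Set P) : Prop :=
  ∀ ρ ∈ S, ∀ σ ∈ S, ρ ≠ σ → T.p ρ σ = 0

/-- The orthoplement of a subset. -/
def orthC (Q : Set P) : Set P := {σ | ∀ ρ ∈ Q, T.p ρ σ = 0}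

/-- A subset is orthoclosed if it equals its double orthoplement. -/
def IsOrthoclosed (Q : Set P) : Prop := T.orthC (T.orthC Q) = Q

/-- `B` is a basis of `Q`: it is an orthogonal subset of `Q`, and for every `σ ∈ Q`
the supremum of the finite partial sums `∑_{ρ ∈ B} p ρ σ` equals `1`. -/
def IsBasisOf (B Q : Set P) : Prop :=
  B ⊆ Q ∧ T.IsOrthoSet B ∧
    ∀ σ ∈ Q, IsLUB {s : ℝ | ∃ F : Finset P, ↑F ⊆ B ∧ s = ∑ ρ ∈ F, T.p ρ σ} 1

/-- `S` is a maximal orthogonal subset of `Q`. -/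
def MaximalOrthoIn (Q S : Set P) : Prop :=
  S ⊆ Q ∧ T.IsOrthoSet S ∧ ∀ S', S ⊆ S' → S' ⊆ Q → T.IsOrthoSet S' → S' = S

/-- A transition probability space is well-behaved if it is symmetric and every maximal
orthogonal subset of an orthoclosed subset is a basis of it. -/
def WellBehaved : Prop :=
  (∀ ρ σ, T.p ρ σ = T.p σ ρ) ∧
    ∀ Q, T.IsOrthoclosed Q → ∀ S, T.MaximalOrthoIn Q S → T.IsBasisOf S Q

/-- The equivalence relation generated by `p ρ σ ≠ 0`. -/
def SameSector : P → P → Prop := Relation.EqvGen fun ρ σ => T.p ρ σ ≠ 0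

/-- A sector is an equivalence class of `SameSector`. -/
def IsSector (C : Set P) : Prop := ∃ ρ, C = {σ | T.SameSector ρ σ}

/-- The two-sphere property: for any two distinct equivalent points `ρ, σ`, the set
`{ρ,σ}^⊥⊥` is in bijection with the unit two-sphere in `ℝ³`, in a way turning the
transition probabilities into `p(z,w) = (1 + ⟨z,w⟩)/2`. -/
def TwoSphereProperty : Prop :=
  ∀ ρ σ : P, ρ ≠ σ → T.SameSector ρ σ →
    ∃ f : P → EuclideanSpace ℝ (Fin 3),
      Set.BijOn f (T.orthC (T.orthC {ρ, σ})) (Metric.sphere 0 1) ∧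
      ∀ ρ' ∈ T.orthC (T.orthC {ρ, σ}), ∀ σ' ∈ T.orthC (T.orthC {ρ, σ}),
        T.p ρ' σ' = (1 + (inner ℝ (f ρ') (f σ') : ℝ)) / 2

end TPSpace


/-!
A basis `B` of `Q` extends to a basis `S` of `R = ρ ∨ Q`, and the points of `S \ B` lie in
`R ∧ Q^⊥`. The set `S \ B` is nonempty, since otherwise `ρ ∈ B^⊥⊥ = Q`. It cannot contain two
points `σ₁, σ₀`: no point of `R ∧ Q^⊥` is orthogonal to `ρ` (it would lie in `R ∩ R^⊥`), yet the
two-sphere `N = {σ₁, σ₀}^⊥⊥ ⊆ R ∧ Q^⊥` contains one. To find it, antipodes in two-spheres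
through `ρ`, `σ₁`, `σ₀` produce the components `w ∈ (S \ {σ₁, σ₀})^⊥⊥` and `u ∈ N` of `ρ`, with
`ρ ∈ {w, u}^⊥⊥`; the antipode of `u` in `N` is orthogonal to `w` and `u`, hence to `ρ`. Finally,
if `S \ B = {σ}`, every point of `R ∧ Q^⊥` lies in `{σ}^⊥⊥ = {σ}`.
-/

open Set

namespace TPSpace

variable {P : Type*} (T : TPSpace P)

theorem p_self (x : P) : T.p x x = 1 := (T.eq_one_iff x x).2 rfl

theorem p_self_ne_zero (x : P) : T.p x x ≠ 0 := by simp [p_self]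

theorem p_eq_zero_comm {x y : P} : T.p x y = 0 ↔ T.p y x = 0 := T.zero_iff x y

theorem mem_orthC_insert {a x : P} {A : Set P} :
    x ∈ T.orthC (insert a A) ↔ T.p a x = 0 ∧ x ∈ T.orthC A := by
  simp [orthC]

theorem mem_orthC_pair {a b x : P} : x ∈ T.orthC {a, b} ↔ T.p a x = 0 ∧ T.p b x = 0 := by
  simp [orthC]

theorem subset_orthC_orthC (A : Set P) : A ⊆ T.orthC (T.orthC A) :=
  fun _ ha _ hx => T.p_eq_zero_comm.1 (hx _ ha)

theorem orthC_anti {A A' : Set P} (h : A ⊆ A') : T.orthC A' ⊆ T.orthC A :=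
  fun _ hx _ ha => hx _ (h ha)

theorem orthC_orthC_mono {A A' : Set P} (h : A ⊆ A') :
    T.orthC (T.orthC A) ⊆ T.orthC (T.orthC A') :=
  T.orthC_anti (T.orthC_anti h)

theorem orthC_orthC_orthC (A : Set P) : T.orthC (T.orthC (T.orthC A)) = T.orthC A :=
  (T.orthC_anti (T.subset_orthC_orthC A)).antisymm (T.subset_orthC_orthC _)

theorem isOrthoclosed_orthC (A : Set P) : T.IsOrthoclosed (T.orthC A) :=
  T.orthC_orthC_orthC A

theorem orthC_orthC_subset_of_subset {A R : Set P} (hR : T.IsOrthoclosed R)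
    (h : A ⊆ R) : T.orthC (T.orthC A) ⊆ R :=
  (T.orthC_orthC_mono h).trans hR.subset

theorem isOrthoclosed_inter {A A' : Set P} (hA : T.IsOrthoclosed A)
    (hA' : T.IsOrthoclosed A') : T.IsOrthoclosed (A ∩ A') :=
  Subset.antisymm (subset_inter ((T.orthC_orthC_mono inter_subset_left).trans hA.subset)
    ((T.orthC_orthC_mono inter_subset_right).trans hA'.subset)) (T.subset_orthC_orthC _)

theorem not_mem_orthC_of_mem_orthC_orthC {A : Set P} {x : P}
    (hx : x ∈ T.orthC (T.orthC A)) : x ∉ T.orthC A :=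
  fun hx' => T.p_self_ne_zero x (hx x hx')

theorem isOrthoSet_insert {S : Set P} {a : P} (hS : T.IsOrthoSet S)
    (h : ∀ b ∈ S, T.p a b = 0) : T.IsOrthoSet (insert a S) :=
  Set.Pairwise.insert hS fun b hb _ => ⟨h b hb, T.p_eq_zero_comm.1 (h b hb)⟩

theorem isOrthoSet_pair {a b : P} (h : T.p a b = 0) : T.IsOrthoSet {a, b} :=
  T.isOrthoSet_insert (Set.pairwise_singleton _ _) (by simpa using h)

def partialSums (O : Set P) (z : P) : Set ℝ :=
  {s | ∃ F : Finset P, ↑F ⊆ O ∧ s = ∑ x ∈ F, T.p x z}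

theorem partialSums_eq_of_orthogonal {A S : Set P} {z : P} (hAS : A ⊆ S)
    (hz : ∀ s ∈ S \ A, T.p s z = 0) : T.partialSums S z = T.partialSums A z := by
  classical
  ext s
  constructor
  · rintro ⟨F, hF, rfl⟩
    refine ⟨F.filter (· ∈ A), by simp [Set.subset_def], (Finset.sum_filter_of_ne ?_).symm⟩
    intro x hx hxz
    by_contra hxA
    exact hxz (hz x ⟨hF hx, hxA⟩)
  · rintro ⟨F, hF, rfl⟩
    exact ⟨F, hF.trans hAS, rfl⟩

theorem exists_isBasisOf_superset (hwb : T.WellBehaved) {R O : Set P}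
    (hR : T.IsOrthoclosed R) (hOR : O ⊆ R) (hO : T.IsOrthoSet O) :
    ∃ S, O ⊆ S ∧ T.IsBasisOf S R := by
  obtain ⟨S, hOS, hS⟩ := zorn_subset_nonempty {S | S ⊆ R ∧ T.IsOrthoSet S}
    (fun c hc hchain _ => ⟨⋃₀ c, ⟨sUnion_subset fun s hs => (hc hs).1,
      (pairwise_sUnion hchain.directedOn).2 fun s hs => (hc hs).2⟩,
      fun _ hs => subset_sUnion_of_mem hs⟩) O ⟨hOR, hO⟩
  exact ⟨S, hOS, hwb.2 R hR S
    ⟨hS.prop.1, hS.prop.2, fun S' hSS' hS'R hS' => hS.eq_of_superset ⟨hS'R, hS'⟩ hSS'⟩⟩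

theorem sum_le_one (hwb : T.WellBehaved) {F : Finset P} (hF : T.IsOrthoSet ↑F) (z : P) :
    ∑ x ∈ F, T.p x z ≤ 1 := by
  obtain ⟨S, hFS, hS⟩ := T.exists_isBasisOf_superset hwb (T.isOrthoclosed_orthC _)
    (fun x hx => T.subset_orthC_orthC (↑F ∪ {z}) (Or.inl hx)) hF
  exact (hS.2.2 z (T.subset_orthC_orthC _ (Or.inr rfl))).1 ⟨F, hFS, rfl⟩

theorem mem_orthC_orthC_of_isLUB (hwb : T.WellBehaved) {O : Set P} (hO : T.IsOrthoSet O)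
    {z : P} (h : IsLUB (T.partialSums O z) 1) : z ∈ T.orthC (T.orthC O) := by
  classical
  intro x hx
  have hxO : x ∉ O := fun hxO => T.p_self_ne_zero x (hx x hxO)
  have hbound : ∀ s ∈ T.partialSums O z, s ≤ 1 - T.p x z := by
    rintro s ⟨F, hF, rfl⟩
    have hxF : x ∉ F := fun hxF => hxO (hF hxF)
    have hxF' : T.IsOrthoSet ↑(insert x F) := by
      simpa using T.isOrthoSet_insert (Set.Pairwise.mono hF hO)
        fun b hb => T.p_eq_zero_comm.1 (hx b (hF hb))
    have hle := T.sum_le_one hwb hxF' z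
    rw [Finset.sum_insert hxF] at hle
    linarith
  linarith [h.2 hbound, T.nonneg x z]

theorem isBasisOf_orthC_orthC (hwb : T.WellBehaved) {O : Set P} (hO : T.IsOrthoSet O) :
    T.IsBasisOf O (T.orthC (T.orthC O)) := by
  refine hwb.2 _ (T.isOrthoclosed_orthC _) O ⟨T.subset_orthC_orthC O, hO, ?_⟩
  intro S hOS hS hSo
  refine hOS.antisymm' fun y hy => ?_
  by_contra hyO
  exact T.not_mem_orthC_of_mem_orthC_orthC (hS hy)
    fun x hx => hSo x (hOS hx) y hy fun h => hyO (h ▸ hx)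

theorem eq_orthC_orthC_of_isBasisOf (hwb : T.WellBehaved) {B Q : Set P}
    (hQ : T.IsOrthoclosed Q) (hB : T.IsBasisOf B Q) : Q = T.orthC (T.orthC B) :=
  Subset.antisymm (fun z hz => T.mem_orthC_orthC_of_isLUB hwb hB.2.1 (hB.2.2 z hz))
    (T.orthC_orthC_subset_of_subset hQ hB.1)

theorem mem_orthC_orthC_of_isBasisOf (hwb : T.WellBehaved) {A S R : Set P}
    (hS : T.IsBasisOf S R) (hAS : A ⊆ S) {x : P} (hx : x ∈ R)
    (hxS : ∀ s ∈ S \ A, T.p s x = 0) : x ∈ T.orthC (T.orthC A) :=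
  T.mem_orthC_orthC_of_isLUB hwb (Set.Pairwise.mono hAS hS.2.1)
    (T.partialSums_eq_of_orthogonal hAS hxS ▸ hS.2.2 x hx)

theorem mem_orthC_orthC_of_mem_orthC_orthC_insert (hwb : T.WellBehaved) {A : Set P}
    {w x : P} (hA : T.IsOrthoSet (insert w A)) (hx : x ∈ T.orthC (T.orthC (insert w A)))
    (hwx : T.p w x = 0) : x ∈ T.orthC (T.orthC A) := by
  refine T.mem_orthC_orthC_of_isBasisOf hwb (T.isBasisOf_orthC_orthC hwb hA)
    (subset_insert w A) hx ?_
  rintro s ⟨rfl | hs, hsA⟩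
  · exact hwx
  · exact absurd hs hsA

theorem orthC_orthC_singleton (hwb : T.WellBehaved) (x : P) : T.orthC (T.orthC {x}) = {x} := by
  refine subset_antisymm (fun y hy => ?_) (T.subset_orthC_orthC _)
  have h := (T.isBasisOf_orthC_orthC hwb (Set.pairwise_singleton x _)).2.2 y hy
  have hle : (1 : ℝ) ≤ T.p x y := h.2 fun s ⟨F, hF, hs⟩ => by
    rcases Finset.subset_singleton_iff.1 (by exact_mod_cast hF) with rfl | rfl <;>
      simp [hs, T.nonneg]
  exact ((T.eq_one_iff x y).1 (le_antisymm (T.le_one x y) hle)).symm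

theorem mem_orthC_orthC_of_sum_eq_one (hwb : T.WellBehaved) {F : Finset P}
    (hF : T.IsOrthoSet ↑F) {z : P} (h : ∑ x ∈ F, T.p x z = 1) :
    z ∈ T.orthC (T.orthC ↑F) := by
  refine T.mem_orthC_orthC_of_isLUB hwb hF ⟨?_, fun b hb => hb ⟨F, subset_rfl, h.symm⟩⟩
  rintro s ⟨F', hF', rfl⟩
  exact h ▸ Finset.sum_le_sum_of_subset_of_nonneg (Finset.coe_subset.1 hF')
    fun x _ _ => T.nonneg x z

def IsTwoSphere (D : Set P) : Prop :=
  T.IsOrthoclosed D ∧ ∃ f : P → EuclideanSpace ℝ (Fin 3),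
    Set.BijOn f D (Metric.sphere 0 1) ∧
      ∀ x ∈ D, ∀ y ∈ D, T.p x y = (1 + (inner ℝ (f x) (f y) : ℝ)) / 2

theorem isTwoSphere_of_sameSector (h2s : T.TwoSphereProperty) {x y : P} (hxy : x ≠ y)
    (hs : T.SameSector x y) : T.IsTwoSphere (T.orthC (T.orthC {x, y})) :=
  ⟨T.isOrthoclosed_orthC _, h2s x y hxy hs⟩

theorem isTwoSphere_of_p_ne_zero (h2s : T.TwoSphereProperty) {x y : P} (hxy : x ≠ y)
    (hp : T.p x y ≠ 0) : T.IsTwoSphere (T.orthC (T.orthC {x, y})) :=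
  T.isTwoSphere_of_sameSector h2s hxy (.rel x y hp)

namespace IsTwoSphere

variable {T} {D : Set P}

theorem exists_orthogonal (hD : T.IsTwoSphere D) {z : P} (hz : z ∈ D) :
    ∃ w ∈ D, T.p z w = 0 := by
  obtain ⟨-, f, hf, hp⟩ := hD
  have hfz : ‖f z‖ = 1 := mem_sphere_zero_iff_norm.1 (hf.mapsTo hz)
  obtain ⟨w, hw, hfw⟩ := hf.surjOn (mem_sphere_zero_iff_norm.2 (by rwa [norm_neg]) :
    -f z ∈ Metric.sphere (0 : EuclideanSpace ℝ (Fin 3)) 1)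
  refine ⟨w, hw, ?_⟩
  rw [hp z hz w hw, hfw, inner_neg_right, real_inner_self_eq_norm_sq, hfz]
  norm_num

/-- Orthogonal points of a two-sphere are antipodal, so their transition probabilities to any
third point of the sphere add up to `1`. -/
theorem subset_orthC_orthC_of_orthogonal (hwb : T.WellBehaved) (hD : T.IsTwoSphere D)
    {z o : P} (hz : z ∈ D) (ho : o ∈ D) (hzo : T.p z o = 0) :
    D ⊆ T.orthC (T.orthC {z, o}) := by
  classical
  obtain ⟨-, f, hf, hp⟩ := hD
  have hfz : ‖f z‖ = 1 := mem_sphere_zero_iff_norm.1 (hf.mapsTo hz)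
  have hfo : ‖f o‖ = 1 := mem_sphere_zero_iff_norm.1 (hf.mapsTo ho)
  have hinner : (inner ℝ (f z) (f o) : ℝ) = -1 := by linarith [hp z hz o ho]
  have hantipodal : f z + f o = 0 := by
    rw [← norm_eq_zero, ← sq_eq_zero_iff, norm_add_sq_real, hfz, hfo, hinner]
    norm_num
  have hzo' : z ≠ o := fun h => T.p_self_ne_zero z (h ▸ hzo)
  intro d hd
  have hsum : ∑ x ∈ ({z, o} : Finset P), T.p x d = 1 := by
    rw [Finset.sum_pair hzo', hp z hz d hd, hp o ho d hd, ← add_div, add_add_add_comm,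
      ← inner_add_left, hantipodal, inner_zero_left]
    norm_num
  simpa using T.mem_orthC_orthC_of_sum_eq_one hwb (by simpa using T.isOrthoSet_pair hzo) hsum

end IsTwoSphere

theorem p_ne_zero_of_mem_orthC_orthC_union_inter_orthC {ρ σ : P} {Q : Set P}
    (hσ : σ ∈ T.orthC (T.orthC ({ρ} ∪ Q)) ∩ T.orthC Q) : T.p ρ σ ≠ 0 := fun h =>
  T.not_mem_orthC_of_mem_orthC_orthC hσ.1 (by rintro x (rfl | hx); exacts [h, hσ.2 x hx])

/-- Two successive antipodes, in `{ρ, σ₁}^⊥⊥` and then in `{σ₀, a}^⊥⊥`, remove from `ρ` its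
components along `σ₁` and `σ₀`. -/
theorem exists_orthogonal_pair_mem_orthC_orthC_insert (hwb : T.WellBehaved)
    (h2s : T.TwoSphereProperty) {ρ σ₁ σ₀ : P} (h₁₀ : T.p σ₁ σ₀ = 0) (hρ₁ : T.p ρ σ₁ ≠ 0)
    (hρ₀ : T.p ρ σ₀ ≠ 0) (hρN : ρ ∉ T.orthC (T.orthC {σ₁, σ₀})) :
    ∃ w ∈ T.orthC (T.orthC {ρ, σ₁, σ₀}), T.p σ₁ w = 0 ∧ T.p σ₀ w = 0 ∧
      ρ ∈ T.orthC (T.orthC {w, σ₁, σ₀}) := by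
  have hρσ₁ : ρ ≠ σ₁ := by
    rintro rfl
    exact hρN (T.subset_orthC_orthC _ (by simp))
  have hN₁ := T.isTwoSphere_of_p_ne_zero h2s hρσ₁ hρ₁
  have hσ₁N₁ : σ₁ ∈ T.orthC (T.orthC {ρ, σ₁}) := T.subset_orthC_orthC _ (by simp)
  obtain ⟨a, haN₁, hσ₁a⟩ := hN₁.exists_orthogonal hσ₁N₁
  have hρa : ρ ∈ T.orthC (T.orthC {σ₁, a}) :=
    hN₁.subset_orthC_orthC_of_orthogonal hwb hσ₁N₁ haN₁ hσ₁a (T.subset_orthC_orthC _ (by simp))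
  have haσ₀ : a ≠ σ₀ := by
    rintro rfl
    exact hρN hρa
  have hσ₀a : T.p σ₀ a ≠ 0 := fun h =>
    hρ₀ (T.p_eq_zero_comm.1 (hρa σ₀ (T.mem_orthC_pair.2 ⟨h₁₀, T.p_eq_zero_comm.1 h⟩)))
  have hN₂ := T.isTwoSphere_of_p_ne_zero h2s haσ₀.symm hσ₀a
  have hσ₀N₂ : σ₀ ∈ T.orthC (T.orthC {σ₀, a}) := T.subset_orthC_orthC _ (by simp)
  have haN₂ : a ∈ T.orthC (T.orthC {σ₀, a}) := T.subset_orthC_orthC _ (by simp)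
  obtain ⟨w, hwN₂, hσ₀w⟩ := hN₂.exists_orthogonal hσ₀N₂
  have haw : a ∈ T.orthC (T.orthC {σ₀, w}) :=
    hN₂.subset_orthC_orthC_of_orthogonal hwb hσ₀N₂ hwN₂ hσ₀w haN₂
  refine ⟨w, ?_, hwN₂ σ₁ ?_, hσ₀w, ?_⟩
  · refine T.orthC_orthC_subset_of_subset (T.isOrthoclosed_orthC _) (pair_subset_iff.2
      ⟨T.subset_orthC_orthC _ (by simp), T.orthC_orthC_mono ?_ haN₁⟩) hwN₂
    exact pair_subset_iff.2 ⟨by simp, by simp⟩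
  · exact T.mem_orthC_pair.2 ⟨T.p_eq_zero_comm.1 h₁₀, T.p_eq_zero_comm.1 hσ₁a⟩
  · refine T.orthC_orthC_subset_of_subset (T.isOrthoclosed_orthC _) (pair_subset_iff.2
      ⟨T.subset_orthC_orthC _ (by simp), T.orthC_orthC_mono ?_ haw⟩) hρa
    exact pair_subset_iff.2 ⟨by simp, by simp⟩

/-- The antipode `u` of `w` in `{ρ, w}^⊥⊥` lies in `{σ₁, σ₀}^⊥⊥`, because it is orthogonal to
a basis of `(S \ {σ₁, σ₀})^⊥⊥` containing `w`. -/
theorem exists_orthogonal_of_mem_orthC_orthC_insert (hwb : T.WellBehaved)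
    (h2s : T.TwoSphereProperty) {R S : Set P} (hR : T.IsOrthoclosed R) (hS : T.IsBasisOf S R)
    {σ₁ σ₀ ρ w : P} (h₁ : σ₁ ∈ S) (h₀ : σ₀ ∈ S)
    (hN : T.IsTwoSphere (T.orthC (T.orthC {σ₁, σ₀}))) (hwR : w ∈ R)
    (hσ₁w : T.p σ₁ w = 0) (hσ₀w : T.p σ₀ w = 0) (hρ : ρ ∈ T.orthC (T.orthC {w, σ₁, σ₀}))
    (hρw : ρ ≠ w) (hpρw : T.p ρ w ≠ 0) :
    ∃ τ ∈ T.orthC (T.orthC {σ₁, σ₀}), T.p ρ τ = 0 := by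
  have hσQ' : ∀ σ ∈ ({σ₁, σ₀} : Set P), σ ∈ T.orthC (S \ {σ₁, σ₀}) :=
    fun σ hσ s hs => hS.2.1 s hs.1 σ (by rcases hσ with rfl | rfl <;> assumption)
      fun h => hs.2 (h ▸ hσ)
  have hwQ' : w ∈ T.orthC (T.orthC (S \ {σ₁, σ₀})) := by
    refine T.mem_orthC_orthC_of_isBasisOf hwb hS Set.sdiff_subset hwR ?_
    rintro s ⟨hs, hs'⟩
    rcases (show s ∈ ({σ₁, σ₀} : Set P) from not_not.1 fun h => hs' ⟨hs, h⟩) with rfl | rfl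
    exacts [hσ₁w, hσ₀w]
  obtain ⟨B', hwB', hB'⟩ := T.exists_isBasisOf_superset hwb (T.isOrthoclosed_orthC _)
    (singleton_subset_iff.2 hwQ') (Set.pairwise_singleton w _)
  have hN₃ := T.isTwoSphere_of_p_ne_zero h2s hρw hpρw
  have hwN₃ : w ∈ T.orthC (T.orthC {ρ, w}) := T.subset_orthC_orthC _ (by simp)
  obtain ⟨u, huN₃, hwu⟩ := hN₃.exists_orthogonal hwN₃
  have huB' : u ∈ T.orthC B' := by
    intro b hb
    rcases eq_or_ne b w with rfl | hbw
    · exact hwu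
    have hpwb : T.p w b = 0 := hB'.2.1 w (hwB' rfl) b hb hbw.symm
    have hbρ : T.p b ρ = 0 := hρ b (T.mem_orthC_insert.2 ⟨hpwb, T.mem_orthC_pair.2
      ⟨hB'.1 hb σ₁ (hσQ' σ₁ (by simp)), hB'.1 hb σ₀ (hσQ' σ₀ (by simp))⟩⟩)
    exact huN₃ b (T.mem_orthC_pair.2 ⟨T.p_eq_zero_comm.1 hbρ, hpwb⟩)
  have hρR : ρ ∈ R := T.orthC_orthC_subset_of_subset hR
    (by simp [insert_subset_iff, hwR, hS.1 h₁, hS.1 h₀]) hρ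
  have huN : u ∈ T.orthC (T.orthC {σ₁, σ₀}) := by
    refine T.mem_orthC_orthC_of_isBasisOf hwb hS (pair_subset_iff.2 ⟨h₁, h₀⟩)
      (T.orthC_orthC_subset_of_subset hR (pair_subset_iff.2 ⟨hρR, hwR⟩) huN₃) fun s hs => ?_
    have hsB' : s ∈ T.orthC (T.orthC B') :=
      T.eq_orthC_orthC_of_isBasisOf hwb (T.isOrthoclosed_orthC _) hB' ▸
        T.subset_orthC_orthC _ hs
    exact T.p_eq_zero_comm.1 (hsB' u huB')
  obtain ⟨τ, hτN, huτ⟩ := hN.exists_orthogonal huN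
  have hwτ : T.p w τ = 0 := hτN w (T.mem_orthC_pair.2 ⟨hσ₁w, hσ₀w⟩)
  have hρwu : ρ ∈ T.orthC (T.orthC {w, u}) :=
    hN₃.subset_orthC_orthC_of_orthogonal hwb hwN₃ huN₃ hwu (T.subset_orthC_orthC _ (by simp))
  exact ⟨τ, hτN, T.p_eq_zero_comm.1 (hρwu τ (T.mem_orthC_pair.2 ⟨hwτ, huτ⟩))⟩

theorem exists_orthogonal_mem_orthC_orthC_pair (hwb : T.WellBehaved)
    (h2s : T.TwoSphereProperty) {R S : Set P} (hR : T.IsOrthoclosed R) (hS : T.IsBasisOf S R)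
    {σ₁ σ₀ : P} (h₁ : σ₁ ∈ S) (h₀ : σ₀ ∈ S) (hne : σ₁ ≠ σ₀) {ρ : P} (hρ : ρ ∈ R) :
    ∃ τ ∈ T.orthC (T.orthC {σ₁, σ₀}), T.p ρ τ = 0 := by
  by_cases hρ₁ : T.p ρ σ₁ = 0
  · exact ⟨σ₁, T.subset_orthC_orthC _ (by simp), hρ₁⟩
  by_cases hρ₀ : T.p ρ σ₀ = 0
  · exact ⟨σ₀, T.subset_orthC_orthC _ (by simp), hρ₀⟩
  have h₁₀ : T.p σ₁ σ₀ = 0 := hS.2.1 σ₁ h₁ σ₀ h₀ hne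
  have hN := T.isTwoSphere_of_sameSector h2s hne
    (.trans _ _ _ (.symm _ _ (.rel _ _ hρ₁)) (.rel _ _ hρ₀))
  by_cases hρN : ρ ∈ T.orthC (T.orthC {σ₁, σ₀})
  · exact hN.exists_orthogonal hρN
  obtain ⟨w, hw, hσ₁w, hσ₀w, hρW⟩ :=
    T.exists_orthogonal_pair_mem_orthC_orthC_insert hwb h2s h₁₀ hρ₁ hρ₀ hρN
  have hwR : w ∈ R := T.orthC_orthC_subset_of_subset hR
    (by simp [insert_subset_iff, hρ, hS.1 h₁, hS.1 h₀]) hw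
  have hρw : ρ ≠ w := by
    rintro rfl
    exact hρ₁ (T.p_eq_zero_comm.1 hσ₁w)
  have hpρw : T.p ρ w ≠ 0 := fun h => hρN <|
    T.mem_orthC_orthC_of_mem_orthC_orthC_insert hwb
      (T.isOrthoSet_insert (T.isOrthoSet_pair h₁₀) fun b hb => by
        rcases hb with rfl | rfl
        exacts [T.p_eq_zero_comm.1 hσ₁w, T.p_eq_zero_comm.1 hσ₀w])
      hρW (T.p_eq_zero_comm.1 h)
  exact T.exists_orthogonal_of_mem_orthC_orthC_insert hwb h2s hR hS h₁ h₀ hN hwR hσ₁w hσ₀w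
    hρW hρw hpρw

end TPSpace

/-- In a well-behaved transition probability space with the two-sphere property, if `Q`
is orthoclosed with a finite basis and `ρ ∉ Q`, then `(ρ ∨ Q) ∧ Q^⊥`, i.e.
`({ρ} ∪ Q)^⊥⊥ ∩ Q^⊥`, is an atom (a singleton). -/
theorem join_atom_meet_orthC_is_atom {P : Type*} (T : TPSpace P)
    (hwb : T.WellBehaved) (h2s : T.TwoSphereProperty)
    (Q : Set P) (hQ : T.IsOrthoclosed Q)
    (B : Finset P) (hB : T.IsBasisOf ↑B Q)
    (ρ : P) (hρ : ρ ∉ Q) :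
    ∃ σ : P, T.orthC (T.orthC ({ρ} ∪ Q)) ∩ T.orthC Q = {σ} := by
  set R := T.orthC (T.orthC ({ρ} ∪ Q))
  have hR : T.IsOrthoclosed R := T.isOrthoclosed_orthC _
  have hρR : ρ ∈ R := T.subset_orthC_orthC _ (Or.inl rfl)
  have hQB : Q = T.orthC (T.orthC ↑B) := T.eq_orthC_orthC_of_isBasisOf hwb hQ hB
  obtain ⟨S, hBS, hS⟩ := T.exists_isBasisOf_superset hwb hR
    (hB.1.trans (subset_union_right.trans (T.subset_orthC_orthC _))) hB.2.1
  have hSB : S \ ↑B ⊆ R ∩ T.orthC Q := fun s hs => ⟨hS.1 hs.1, by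
    rw [hQB, T.orthC_orthC_orthC]
    exact fun b hb => hS.2.1 b (hBS hb) s hs.1 fun h => hs.2 (h ▸ hb)⟩
  obtain ⟨σ, hσ⟩ : (S \ ↑B).Nonempty := by
    by_contra! h
    exact hρ (hQB ▸ T.mem_orthC_orthC_of_isBasisOf hwb hS hBS hρR (by simp [h]))
  have hSBσ : S \ ↑B ⊆ {σ} := by
    intro σ' hσ'
    by_contra hne
    obtain ⟨τ, hτ, hρτ⟩ :=
      T.exists_orthogonal_mem_orthC_orthC_pair hwb h2s hR hS hσ'.1 hσ.1 hne hρR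
    exact T.p_ne_zero_of_mem_orthC_orthC_union_inter_orthC (T.orthC_orthC_subset_of_subset
      (T.isOrthoclosed_inter hR (T.isOrthoclosed_orthC Q)) (pair_subset_iff.2 ⟨hSB hσ', hSB hσ⟩)
      hτ) hρτ
  refine ⟨σ, Subset.antisymm (fun τ hτ => ?_) (singleton_subset_iff.2 (hSB hσ))⟩
  rw [← T.orthC_orthC_singleton hwb]
  refine T.mem_orthC_orthC_of_isBasisOf hwb hS (singleton_subset_iff.2 hσ.1) hτ.1 fun s hs => ?_
  by_cases hsB : s ∈ (↑B : Set P)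
  · exact hτ.2 s (hB.1 hsB)
  · exact absurd (hSBσ ⟨hs.1, hsB⟩) hs.2
end

section
/- Let H be a complex Hilbert space and Q ⊆ H a closed subspace with orthogonal complement Q^⊥. Let f be a function on the unit sphere of H of the form f(τ) = Σ_{i=1}^N c_i |⟨ρ_i,τ⟩|², with N ∈ ℕ, c_i ∈ ℝ, and ρ_i unit vectors in H. If f(τ) ≥ 0 for every unit vector τ ∈ H, f(τ) = 0 for every unit vector τ ∈ Q, and f(τ) = 0 for every unit vector τ ∈ Q^⊥, then f(τ) = 0 for every unit vector τ ∈ H. -/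
/-!
The form `f(τ) = ∑ᵢ cᵢ |⟨ρᵢ, τ⟩|²` is `re ⟨A τ, τ⟩` for the symmetric operator
`A = ∑ᵢ cᵢ |ρᵢ⟩⟨ρᵢ|`, and by homogeneity `f ≥ 0` on the sphere makes `A` positive.
For a positive operator, `⟨A x, x⟩ = 0` forces `A x = 0` (the real quadratic
`t ↦ ⟨A (x + t A x), x + t A x⟩` is nonnegative, so its discriminant `4 ‖A x‖⁴` is `≤ 0`);
hence `A` vanishes on `Q` and on `Q^⊥`. Since `A` is symmetric, its range is orthogonal to its
kernel, so it lies in `Q^⊥ ∩ Q^⊥⊥ = 0`. Thus `A = 0` and `f = 0`.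
-/

section

open InnerProductSpace RCLike
open scoped InnerProduct

variable {𝕜 E : Type*} [RCLike 𝕜] [NormedAddCommGroup E] [InnerProductSpace 𝕜 E]

namespace LinearMap

theorem re_inner_map_smul_self (T : E →ₗ[𝕜] E) (r : 𝕜) (x : E) :
    re ⟪T (r • x), r • x⟫_𝕜 = ‖r‖ ^ 2 * re ⟪T x, x⟫_𝕜 := by
  rw [map_smul, inner_smul_left, inner_smul_right, ← mul_assoc, RCLike.conj_mul, ← ofReal_pow,
    re_ofReal_mul]

theorem re_inner_map_self_eq_norm_sq_mul (T : E →ₗ[𝕜] E) {x : E} (hx : x ≠ 0) :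
    re ⟪T x, x⟫_𝕜 = ‖x‖ ^ 2 * re ⟪T ((‖x‖⁻¹ : 𝕜) • x), (‖x‖⁻¹ : 𝕜) • x⟫_𝕜 := by
  rw [re_inner_map_smul_self, ← mul_assoc, norm_inv, norm_ofReal, abs_norm, ← mul_pow,
    mul_inv_cancel₀ (norm_ne_zero_iff.mpr hx), one_pow, one_mul]

theorem isPositive_of_re_inner_nonneg_of_norm_eq_one {T : E →ₗ[𝕜] E} (hT : T.IsSymmetric)
    (h : ∀ x, ‖x‖ = 1 → 0 ≤ re ⟪T x, x⟫_𝕜) : T.IsPositive := by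
  refine ⟨hT, fun x ↦ ?_⟩
  rcases eq_or_ne x 0 with rfl | hx
  · simp
  · rw [re_inner_map_self_eq_norm_sq_mul T hx]
    exact mul_nonneg (sq_nonneg _) (h _ (norm_smul_inv_norm hx))

theorem re_inner_map_self_eq_zero_of_norm_eq_one (T : E →ₗ[𝕜] E) {K : Submodule 𝕜 E}
    (h : ∀ x ∈ K, ‖x‖ = 1 → re ⟪T x, x⟫_𝕜 = 0) {x : E} (hxK : x ∈ K) : re ⟪T x, x⟫_𝕜 = 0 := by
  rcases eq_or_ne x 0 with rfl | hx
  · simp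
  · rw [re_inner_map_self_eq_norm_sq_mul T hx, h _ (K.smul_mem _ hxK) (norm_smul_inv_norm hx),
      mul_zero]

theorem IsPositive.map_eq_zero_of_re_inner_map_self_eq_zero {T : E →ₗ[𝕜] E} (hT : T.IsPositive)
    {x : E} (hx : re ⟪T x, x⟫_𝕜 = 0) : T x = 0 := by
  have hquad (t : ℝ) : 0 ≤ re ⟪T (T x), T x⟫_𝕜 * (t * t) + 2 * ‖T x‖ ^ 2 * t + 0 := by
    have h := hT.re_inner_nonneg_left (x + (t : 𝕜) • T x)
    have hsymm : re ⟪T (T x), x⟫_𝕜 = ‖T x‖ ^ 2 := by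
      rw [hT.isSymmetric, ← inner_self_eq_norm_sq (𝕜 := 𝕜)]
    simp only [map_add, inner_add_left, inner_add_right, map_smul, inner_smul_left,
      inner_smul_right, conj_ofReal, re_ofReal_mul, hx, hsymm, inner_self_eq_norm_sq] at h
    linarith
  have hdiscrim := discrim_le_zero hquad
  rw [discrim] at hdiscrim
  have : (‖T x‖ ^ 2) ^ 2 = 0 := by nlinarith [sq_nonneg (‖T x‖ ^ 2)]
  simpa using this

theorem IsSymmetric.eq_zero_of_le_ker_of_orthogonal_le_ker {T : E →ₗ[𝕜] E} (hT : T.IsSymmetric)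
    {K : Submodule 𝕜 E} (hK : K ≤ ker T) (hKperp : Kᗮ ≤ ker T) : T = 0 := by
  have range_le (L : Submodule 𝕜 E) (hL : L ≤ ker T) : range T ≤ Lᗮ :=
    (range T).le_orthogonal_orthogonal.trans (hT.orthogonal_range ▸ Submodule.orthogonal_le hL)
  rw [← range_eq_bot, eq_bot_iff, ← Kᗮ.inf_orthogonal_eq_bot]
  exact le_inf (range_le K hK) (range_le Kᗮ hKperp)

end LinearMap

section RankOne

variable {ι : Type*} [Fintype ι]

theorem isSymmetric_sum_smul_rankOne_self (c : ι → ℝ) (ρ : ι → E) :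
    (∑ i, (c i : 𝕜) • (rankOne 𝕜 (ρ i) (ρ i) : E →ₗ[𝕜] E)).IsSymmetric :=
  LinearMap.isSymmetric_sum _ fun i _ ↦ (isSymmetric_rankOne_self (ρ i)).smul (conj_ofReal _)

theorem re_inner_sum_smul_rankOne_self_apply (c : ι → ℝ) (ρ : ι → E) (x : E) :
    re ⟪(∑ i, (c i : 𝕜) • (rankOne 𝕜 (ρ i) (ρ i) : E →ₗ[𝕜] E)) x, x⟫_𝕜 =
      ∑ i, c i * ‖⟪ρ i, x⟫_𝕜‖ ^ 2 := by
  simp only [LinearMap.sum_apply, LinearMap.smul_apply, sum_inner, inner_smul_left,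
    conj_ofReal, ContinuousLinearMap.coe_coe, inner_left_rankOne_apply, ← inner_conj_symm x,
    RCLike.conj_mul, map_sum, ← ofReal_pow, re_ofReal_mul, ofReal_re]

end RankOne

end

theorem vanishes_on_subspace_and_complement_general {H : Type*} [NormedAddCommGroup H]
    [InnerProductSpace ℂ H]
    (Q : Submodule ℂ H)
    (N : ℕ) (c : Fin N → ℝ) (ρ : Fin N → H)
    (hpos : ∀ τ : H, ‖τ‖ = 1 → 0 ≤ ∑ i, c i * ‖(inner ℂ (ρ i) τ : ℂ)‖ ^ 2)
    (hQ0 : ∀ τ : H, τ ∈ Q → ‖τ‖ = 1 → ∑ i, c i * ‖(inner ℂ (ρ i) τ : ℂ)‖ ^ 2 = 0)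
    (hQperp0 : ∀ τ : H, τ ∈ Qᗮ → ‖τ‖ = 1 → ∑ i, c i * ‖(inner ℂ (ρ i) τ : ℂ)‖ ^ 2 = 0) :
    ∀ τ : H, ‖τ‖ = 1 → ∑ i, c i * ‖(inner ℂ (ρ i) τ : ℂ)‖ ^ 2 = 0 := by
  set A : H →ₗ[ℂ] H := ∑ i, (c i : ℂ) • (InnerProductSpace.rankOne ℂ (ρ i) (ρ i) : H →ₗ[ℂ] H)
  have hA_form (τ : H) : RCLike.re (inner ℂ (A τ) τ) = ∑ i, c i * ‖(inner ℂ (ρ i) τ : ℂ)‖ ^ 2 :=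
    re_inner_sum_smul_rankOne_self_apply c ρ τ
  have hA : A.IsPositive :=
    LinearMap.isPositive_of_re_inner_nonneg_of_norm_eq_one
      (isSymmetric_sum_smul_rankOne_self c ρ) fun τ hτ ↦ hA_form τ ▸ hpos τ hτ
  have le_ker_of_vanishing {K : Submodule ℂ H}
      (hK : ∀ τ ∈ K, ‖τ‖ = 1 → ∑ i, c i * ‖(inner ℂ (ρ i) τ : ℂ)‖ ^ 2 = 0) :
      K ≤ LinearMap.ker A := fun _ hx ↦
    hA.map_eq_zero_of_re_inner_map_self_eq_zero <|
      A.re_inner_map_self_eq_zero_of_norm_eq_one (fun τ hτK hτ ↦ hA_form τ ▸ hK τ hτK hτ) hx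
  have hA_zero : A = 0 :=
    hA.isSymmetric.eq_zero_of_le_ker_of_orthogonal_le_ker (le_ker_of_vanishing hQ0)
      (le_ker_of_vanishing hQperp0)
  intro τ _
  rw [← hA_form, hA_zero, LinearMap.zero_apply, inner_zero_left, map_zero]

/-- If a function `f(τ) = ∑ᵢ cᵢ |⟨ρᵢ,τ⟩|²` on the unit sphere of a complex Hilbert
space is nonnegative and vanishes on (the unit vectors of) a closed subspace `Q` and on
its orthogonal complement `Q^⊥`, then it vanishes identically on the unit sphere. -/
theorem vanishes_on_subspace_and_complement {H : Type*} [NormedAddCommGroup H]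
    [InnerProductSpace ℂ H]
    (Q : Submodule ℂ H) (hQ : IsClosed (Q : Set H))
    (N : ℕ) (c : Fin N → ℝ) (ρ : Fin N → H) (hρ : ∀ i, ‖ρ i‖ = 1)
    (hpos : ∀ τ : H, ‖τ‖ = 1 → 0 ≤ ∑ i, c i * ‖(inner ℂ (ρ i) τ : ℂ)‖ ^ 2)
    (hQ0 : ∀ τ : H, τ ∈ Q → ‖τ‖ = 1 → ∑ i, c i * ‖(inner ℂ (ρ i) τ : ℂ)‖ ^ 2 = 0)
    (hQperp0 : ∀ τ : H, τ ∈ Qᗮ → ‖τ‖ = 1 → ∑ i, c i * ‖(inner ℂ (ρ i) τ : ℂ)‖ ^ 2 = 0) :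
    ∀ τ : H, ‖τ‖ = 1 → ∑ i, c i * ‖(inner ℂ (ρ i) τ : ℂ)‖ ^ 2 = 0 :=
  vanishes_on_subspace_and_complement_general Q N c ρ hpos hQ0 hQperp0
end

section
/- Let H be a complex Hilbert space and Q a finite-dimensional subspace of H with orthogonal projection P_Q. For every unit vector σ ∈ H, ‖P_Qσ‖² equals the infimum of f(σ) over all functions f on the unit sphere of H of the form f(τ) = Σ_{i=1}^N c_i |⟨ρ_i,τ⟩|² (N ∈ ℕ, c_i ∈ ℝ, ρ_i unit vectors) that satisfy 0 ≤ f(τ) ≤ 1 for every unit vector τ ∈ H and f(τ) = 1 for every unit vector τ ∈ Q; moreover this infimum is attained by the function τ ↦ ‖P_Qτ‖². -/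
/-!
Both `f` and `‖·‖²` are homogeneous of degree two, so the conditions on the unit sphere say
`0 ≤ f ≤ ‖·‖²` on all of `H`, with equality on `Q`. Then `‖·‖² - f` is a nonnegative quadratic
form vanishing at `p = P_Q σ`, so its cross term with `σ - p ⟂ Q` vanishes, giving
`f σ = f p + f (σ - p) ≥ ‖p‖²`. Equality is attained via Parseval's identity for an
orthonormal basis of `Q`.
-/

open scoped ComplexConjugate InnerProductSpace

section WeightedInnerSq

variable {H : Type*} [NormedAddCommGroup H] [InnerProductSpace ℂ H] {N : ℕ}
  (c : Fin N → ℝ) (ρ : Fin N → H)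

noncomputable def weightedInnerSq (x : H) : ℝ := ∑ i, c i * ‖⟪ρ i, x⟫_ℂ‖ ^ 2

lemma weightedInnerSq_smul (a : ℂ) (x : H) :
    weightedInnerSq c ρ (a • x) = ‖a‖ ^ 2 * weightedInnerSq c ρ x := by
  simp only [weightedInnerSq, inner_smul_right, norm_mul, mul_pow, Finset.mul_sum]
  exact Finset.sum_congr rfl fun i _ => by ring

lemma weightedInnerSq_eq_norm_sq_mul (x : H) :
    weightedInnerSq c ρ x = ‖x‖ ^ 2 * weightedInnerSq c ρ ((‖x‖⁻¹ : ℂ) • x) := by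
  rcases eq_or_ne x 0 with rfl | hx
  · simp [weightedInnerSq]
  · rw [weightedInnerSq_smul, norm_inv, Complex.norm_real, norm_norm, ← mul_assoc, ← mul_pow,
      mul_inv_cancel₀ (norm_ne_zero_iff.2 hx), one_pow, one_mul]

lemma weightedInnerSq_nonneg_of_sphere (h : ∀ τ : H, ‖τ‖ = 1 → 0 ≤ weightedInnerSq c ρ τ)
    (x : H) : 0 ≤ weightedInnerSq c ρ x := by
  rcases eq_or_ne x 0 with rfl | hx
  · simp [weightedInnerSq]
  · rw [weightedInnerSq_eq_norm_sq_mul]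
    exact mul_nonneg (sq_nonneg _) (h _ (norm_smul_inv_norm hx))

lemma weightedInnerSq_le_norm_sq_of_sphere (h : ∀ τ : H, ‖τ‖ = 1 → weightedInnerSq c ρ τ ≤ 1)
    (x : H) : weightedInnerSq c ρ x ≤ ‖x‖ ^ 2 := by
  rcases eq_or_ne x 0 with rfl | hx
  · simp [weightedInnerSq]
  · rw [weightedInnerSq_eq_norm_sq_mul]
    exact mul_le_of_le_one_right (sq_nonneg _) (h _ (norm_smul_inv_norm hx))

lemma weightedInnerSq_eq_norm_sq_of_sphere {K : Submodule ℂ H}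
    (h : ∀ τ ∈ K, ‖τ‖ = 1 → weightedInnerSq c ρ τ = 1) {x : H} (hx : x ∈ K) :
    weightedInnerSq c ρ x = ‖x‖ ^ 2 := by
  rcases eq_or_ne x 0 with rfl | hx₀
  · simp [weightedInnerSq]
  · rw [weightedInnerSq_eq_norm_sq_mul,
      h _ (K.smul_mem (‖x‖⁻¹ : ℂ) hx) (norm_smul_inv_norm hx₀), mul_one]

lemma exists_weightedInnerSq_add_real_smul (x y : H) : ∃ R : ℝ, ∀ t : ℝ,
    weightedInnerSq c ρ (x + (t : ℂ) • y) =
      weightedInnerSq c ρ x + 2 * t * R + t ^ 2 * weightedInnerSq c ρ y := by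
  refine ⟨∑ i, c i * (⟪ρ i, x⟫_ℂ * conj ⟪ρ i, y⟫_ℂ).re, fun t => ?_⟩
  simp only [weightedInnerSq, inner_add_right, inner_smul_right, Complex.sq_norm,
    Complex.normSq_add, Complex.normSq_ofReal, map_mul, Complex.conj_ofReal,
    Finset.mul_sum, ← Finset.sum_add_distrib]
  refine Finset.sum_congr rfl fun i _ => ?_
  rw [mul_left_comm, Complex.re_ofReal_mul]
  ring

/-- The real quadratic `t ↦ ‖x + t • y‖² - weightedInnerSq c ρ (x + t • y)` is nonnegative and
vanishes at `t = 0`, so its discriminant forces its linear coefficient to vanish. -/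
lemma weightedInnerSq_add_of_inner_eq_zero (hle : ∀ z, weightedInnerSq c ρ z ≤ ‖z‖ ^ 2)
    {x y : H} (hx : weightedInnerSq c ρ x = ‖x‖ ^ 2) (hxy : ⟪x, y⟫_ℂ = 0) :
    weightedInnerSq c ρ (x + y) = weightedInnerSq c ρ x + weightedInnerSq c ρ y := by
  obtain ⟨R, hR⟩ := exists_weightedInnerSq_add_real_smul c ρ x y
  have hnorm : ∀ t : ℝ, ‖x + (t : ℂ) • y‖ ^ 2 = ‖x‖ ^ 2 + t ^ 2 * ‖y‖ ^ 2 := fun t => by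
    rw [@norm_add_sq ℂ, inner_smul_right, hxy, norm_smul, Complex.norm_real, Real.norm_eq_abs,
      mul_pow, sq_abs]
    simp
  have hquad : ∀ t : ℝ, 0 ≤ (‖y‖ ^ 2 - weightedInnerSq c ρ y) * (t * t) + -2 * R * t + 0 :=
    fun t => by linarith [hle (x + (t : ℂ) • y), hR t, hnorm t, sq t]
  have hR0 : R = 0 := by
    have := discrim_le_zero hquad
    rw [discrim] at this
    nlinarith [sq_nonneg R]
  simpa [hR0] using hR 1

end WeightedInnerSq

section Projection

variable {H : Type*} [NormedAddCommGroup H] [InnerProductSpace ℂ H]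

lemma sq_norm_orthogonalProjectionOnto_le_weightedInnerSq {N : ℕ} (c : Fin N → ℝ)
    (ρ : Fin N → H) (K : Submodule ℂ H) [K.HasOrthogonalProjection]
    (h0 : ∀ x, 0 ≤ weightedInnerSq c ρ x) (hle : ∀ x, weightedInnerSq c ρ x ≤ ‖x‖ ^ 2)
    (hK : ∀ x ∈ K, weightedInnerSq c ρ x = ‖x‖ ^ 2) (σ : H) :
    ‖K.orthogonalProjectionOnto σ‖ ^ 2 ≤ weightedInnerSq c ρ σ := by
  set p := K.starProjection σ
  have hp : p ∈ K := K.starProjection_apply_mem σ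
  have hsplit : weightedInnerSq c ρ σ = weightedInnerSq c ρ p + weightedInnerSq c ρ (σ - p) := by
    rw [← weightedInnerSq_add_of_inner_eq_zero c ρ hle (hK p hp)
      (K.sub_starProjection_mem_orthogonal σ p hp), add_sub_cancel]
  have hnorm : ‖K.orthogonalProjectionOnto σ‖ = ‖p‖ := rfl
  rw [hsplit, hK p hp, hnorm]
  linarith [h0 (σ - p)]

lemma weightedInnerSq_stdOrthonormalBasis (K : Submodule ℂ H) [FiniteDimensional ℂ K] (x : H) :
    weightedInnerSq (fun _ => 1) (fun i => (stdOrthonormalBasis ℂ K i : H)) x =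
      ‖K.orthogonalProjectionOnto x‖ ^ 2 := by
  rw [← (stdOrthonormalBasis ℂ K).sum_sq_norm_inner_right]
  simp [weightedInnerSq]

end Projection

theorem projection_is_infimum_general {H : Type*} [NormedAddCommGroup H]
    [InnerProductSpace ℂ H]
    (Q : Submodule ℂ H) [FiniteDimensional ℂ Q] (σ : H) :
    IsLeast {s : ℝ | ∃ (N : ℕ) (c : Fin N → ℝ) (ρ : Fin N → H),
        (∀ i, ‖ρ i‖ = 1) ∧
        (∀ τ : H, ‖τ‖ = 1 →
          0 ≤ ∑ i, c i * ‖(inner ℂ (ρ i) τ : ℂ)‖ ^ 2 ∧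
          ∑ i, c i * ‖(inner ℂ (ρ i) τ : ℂ)‖ ^ 2 ≤ 1) ∧
        (∀ τ : H, τ ∈ Q → ‖τ‖ = 1 → ∑ i, c i * ‖(inner ℂ (ρ i) τ : ℂ)‖ ^ 2 = 1) ∧
        s = ∑ i, c i * ‖(inner ℂ (ρ i) σ : ℂ)‖ ^ 2}
      (‖Q.orthogonalProjection σ‖ ^ 2) ∧
    ∃ (N : ℕ) (c : Fin N → ℝ) (ρ : Fin N → H),
      (∀ i, ‖ρ i‖ = 1) ∧
      (∀ τ : H, ‖τ‖ = 1 →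
        ∑ i, c i * ‖(inner ℂ (ρ i) τ : ℂ)‖ ^ 2 = ‖Q.orthogonalProjection τ‖ ^ 2) := by
  set b := stdOrthonormalBasis ℂ Q
  have hb : ∀ i, ‖(b i : H)‖ = 1 := fun i => b.orthonormal.1 i
  have hP := weightedInnerSq_stdOrthonormalBasis Q
  refine ⟨⟨⟨_, _, _, hb, fun τ hτ => ⟨?_, ?_⟩, fun τ hτQ hτ => ?_, (hP σ).symm⟩, ?_⟩,
    ⟨_, _, _, hb, fun τ _ => hP τ⟩⟩
  · exact (hP τ).ge.trans' (sq_nonneg _)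
  · exact (hP τ).trans_le
      (pow_le_one₀ (norm_nonneg _) (hτ ▸ Q.norm_orthogonalProjectionOnto_apply_le τ))
  · refine (hP τ).trans ?_
    rw [Q.orthogonalProjectionOnto_mem_subspace_eq_self ⟨τ, hτQ⟩]
    simp [hτ]
  · rintro s ⟨N, c, ρ, -, hbd, hQ, rfl⟩
    exact sq_norm_orthogonalProjectionOnto_le_weightedInnerSq c ρ Q
      (weightedInnerSq_nonneg_of_sphere c ρ fun τ hτ => (hbd τ hτ).1)
      (weightedInnerSq_le_norm_sq_of_sphere c ρ fun τ hτ => (hbd τ hτ).2)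
      (fun _ => weightedInnerSq_eq_norm_sq_of_sphere c ρ hQ) σ

/-- For a finite-dimensional subspace `Q` of a complex Hilbert space and a unit vector
`σ`, the quantity `‖P_Q σ‖²` is the least value `f(σ)` over all functions
`f(τ) = ∑ᵢ cᵢ |⟨ρᵢ,τ⟩|²` satisfying `0 ≤ f ≤ 1` on the unit sphere and `f = 1` on the
unit vectors of `Q`; moreover the infimum is attained by the function `τ ↦ ‖P_Q τ‖²`. -/
theorem projection_is_infimum {H : Type*} [NormedAddCommGroup H]
    [InnerProductSpace ℂ H] [CompleteSpace H]
    (Q : Submodule ℂ H) [FiniteDimensional ℂ Q] (σ : H) (hσ : ‖σ‖ = 1) :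
    IsLeast {s : ℝ | ∃ (N : ℕ) (c : Fin N → ℝ) (ρ : Fin N → H),
        (∀ i, ‖ρ i‖ = 1) ∧
        (∀ τ : H, ‖τ‖ = 1 →
          0 ≤ ∑ i, c i * ‖(inner ℂ (ρ i) τ : ℂ)‖ ^ 2 ∧
          ∑ i, c i * ‖(inner ℂ (ρ i) τ : ℂ)‖ ^ 2 ≤ 1) ∧
        (∀ τ : H, τ ∈ Q → ‖τ‖ = 1 → ∑ i, c i * ‖(inner ℂ (ρ i) τ : ℂ)‖ ^ 2 = 1) ∧
        s = ∑ i, c i * ‖(inner ℂ (ρ i) σ : ℂ)‖ ^ 2}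
      (‖Q.orthogonalProjection σ‖ ^ 2) ∧
    ∃ (N : ℕ) (c : Fin N → ℝ) (ρ : Fin N → H),
      (∀ i, ‖ρ i‖ = 1) ∧
      (∀ τ : H, ‖τ‖ = 1 →
        ∑ i, c i * ‖(inner ℂ (ρ i) τ : ℂ)‖ ^ 2 = ‖Q.orthogonalProjection τ‖ ^ 2) :=
  projection_is_infimum_general Q σ
end

section
/- Let H be a complex Hilbert space and let x, y be unit vectors in H. Let ω_x and ω_y be the vector states on the algebra B(H) of bounded linear operators on H, i.e., ω_x(A) = ⟨x, A x⟩ and ω_y(A) = ⟨y, A y⟩. Then the norm of the continuous linear functional ω_x − ω_y on B(H) satisfies ‖ω_x − ω_y‖² = 4(1 − |⟨x,y⟩|²); equivalently, the transition probability p(ω_x,ω_y) = 1 − ¼‖ω_x − ω_y‖² equals |⟨x,y⟩|². -/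
/-!
Rotating the phase of `y` does not change `ω_y`, so we may assume `⟪x, y⟫ = |⟪x, y⟫|`. Then
`p = x + y` and `q = x - y` are orthogonal, and `2 (ω_x - ω_y)(A) = ⟪p, A q⟫ + ⟪q, A p⟫` gives
`‖ω_x - ω_y‖ ≤ ‖p‖ ‖q‖`, with equality attained at the operator exchanging `p / ‖p‖` and
`q / ‖q‖`. Finally `‖p‖² ‖q‖² = (2 + 2 |⟪x, y⟫|) (2 - 2 |⟪x, y⟫|)`.
-/

open scoped InnerProductSpace

section

variable (𝕜 : Type*) {H : Type*} [RCLike 𝕜] [NormedAddCommGroup H] [InnerProductSpace 𝕜 H]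

noncomputable def vectorState (x : H) : (H →L[𝕜] H) →L[𝕜] 𝕜 :=
  (innerSL 𝕜 x).comp (ContinuousLinearMap.apply 𝕜 H x)

noncomputable def swapOperator (u v : H) : H →L[𝕜] H :=
  (innerSL 𝕜 v).smulRight u + (innerSL 𝕜 u).smulRight v

variable {𝕜}

@[simp]
lemma vectorState_apply (x : H) (A : H →L[𝕜] H) : vectorState 𝕜 x A = ⟪x, A x⟫_𝕜 := rfl

lemma vectorState_smul_of_norm_eq_one {α : 𝕜} (hα : ‖α‖ = 1) (x : H) :
    vectorState 𝕜 (α • x) = vectorState 𝕜 x := by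
  ext A
  rw [vectorState_apply, vectorState_apply, map_smul, inner_smul_left, inner_smul_right,
    ← mul_assoc, RCLike.conj_mul, hα]
  simp

lemma two_mul_vectorState_sub_apply (x y : H) (A : H →L[𝕜] H) :
    2 * (vectorState 𝕜 x - vectorState 𝕜 y) A = ⟪x + y, A (x - y)⟫_𝕜 + ⟪x - y, A (x + y)⟫_𝕜 := by
  simp only [sub_apply, vectorState_apply, map_add, map_sub, inner_add_left, inner_sub_left,
    inner_add_right, inner_sub_right]
  ring

lemma norm_vectorState_sub_le (x y : H) :
    ‖vectorState 𝕜 x - vectorState 𝕜 y‖ ≤ ‖x + y‖ * ‖x - y‖ := by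
  refine ContinuousLinearMap.opNorm_le_bound _ (by positivity) fun A => ?_
  have h2 : ‖(2 : 𝕜)‖ = 2 := by simp
  have : 2 * ‖(vectorState 𝕜 x - vectorState 𝕜 y) A‖ ≤ 2 * (‖x + y‖ * ‖x - y‖ * ‖A‖) :=
    calc 2 * ‖(vectorState 𝕜 x - vectorState 𝕜 y) A‖
        = ‖⟪x + y, A (x - y)⟫_𝕜 + ⟪x - y, A (x + y)⟫_𝕜‖ := by
          rw [← two_mul_vectorState_sub_apply, norm_mul, h2]
      _ ≤ ‖x + y‖ * ‖A (x - y)‖ + ‖x - y‖ * ‖A (x + y)‖ :=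
          (norm_add_le _ _).trans (add_le_add (norm_inner_le_norm _ _) (norm_inner_le_norm _ _))
      _ ≤ ‖x + y‖ * (‖A‖ * ‖x - y‖) + ‖x - y‖ * (‖A‖ * ‖x + y‖) := by
          gcongr <;> exact A.le_opNorm _
      _ = 2 * (‖x + y‖ * ‖x - y‖ * ‖A‖) := by ring
  linarith

lemma swapOperator_apply (u v z : H) :
    swapOperator 𝕜 u v z = ⟪v, z⟫_𝕜 • u + ⟪u, z⟫_𝕜 • v := rfl

lemma swapOperator_apply_left {u v : H} (hu : ‖u‖ = 1) (huv : ⟪u, v⟫_𝕜 = 0) :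
    swapOperator 𝕜 u v u = v := by
  rw [swapOperator_apply, inner_eq_zero_symm.1 huv, inner_self_eq_norm_sq_to_K, hu]
  simp

lemma swapOperator_apply_right {u v : H} (hv : ‖v‖ = 1) (huv : ⟪u, v⟫_𝕜 = 0) :
    swapOperator 𝕜 u v v = u := by
  rw [swapOperator_apply, huv, inner_self_eq_norm_sq_to_K, hv]
  simp

lemma norm_swapOperator_le_one {u v : H} (hu : ‖u‖ = 1) (hv : ‖v‖ = 1) (huv : ⟪u, v⟫_𝕜 = 0) :
    ‖swapOperator 𝕜 u v‖ ≤ 1 := by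
  have hon : Orthonormal 𝕜 ![u, v] := by
    refine ⟨Fin.forall_fin_two.2 ⟨hu, hv⟩, fun i j hij => ?_⟩
    fin_cases i <;> fin_cases j <;> simp_all [inner_eq_zero_symm]
  refine ContinuousLinearMap.opNorm_le_bound _ zero_le_one fun z => ?_
  have bessel : ‖⟪u, z⟫_𝕜‖ ^ 2 + ‖⟪v, z⟫_𝕜‖ ^ 2 ≤ ‖z‖ ^ 2 := by
    simpa [Fin.sum_univ_two] using hon.sum_inner_products_le (s := Finset.univ) z
  have pythagoras : ‖swapOperator 𝕜 u v z‖ * ‖swapOperator 𝕜 u v z‖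
      = ‖⟪v, z⟫_𝕜‖ ^ 2 + ‖⟪u, z⟫_𝕜‖ ^ 2 := by
    rw [swapOperator_apply, norm_add_sq_eq_norm_sq_add_norm_sq_of_inner_eq_zero _ _
      (by rw [inner_smul_left, inner_smul_right, huv, mul_zero, mul_zero]),
      norm_smul, norm_smul, hu, hv]
    ring
  rw [one_mul, mul_self_le_mul_self_iff (norm_nonneg _) (norm_nonneg _), pythagoras]
  linarith

lemma norm_add_mul_norm_sub_le_norm_vectorState_sub {x y : H} (h : ⟪x + y, x - y⟫_𝕜 = 0) :
    ‖x + y‖ * ‖x - y‖ ≤ ‖vectorState 𝕜 x - vectorState 𝕜 y‖ := by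
  rcases eq_or_ne (x + y) 0 with hp | hp
  · rw [hp, norm_zero, zero_mul]; positivity
  rcases eq_or_ne (x - y) 0 with hq | hq
  · rw [hq, norm_zero, mul_zero]; positivity
  set u : H := (‖x + y‖⁻¹ : 𝕜) • (x + y) with hu_def
  set v : H := (‖x - y‖⁻¹ : 𝕜) • (x - y) with hv_def
  have hu : ‖u‖ = 1 := norm_smul_inv_norm hp
  have hv : ‖v‖ = 1 := norm_smul_inv_norm hq
  have huv : ⟪u, v⟫_𝕜 = 0 := by
    rw [hu_def, hv_def, inner_smul_left, inner_smul_right, h, mul_zero, mul_zero]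
  have hpu : x + y = (‖x + y‖ : 𝕜) • u := by simp [u, smul_smul, hp]
  have hqv : x - y = (‖x - y‖ : 𝕜) • v := by simp [v, smul_smul, hq]
  have hvalue : (vectorState 𝕜 x - vectorState 𝕜 y) (swapOperator 𝕜 u v)
      = (‖x + y‖ * ‖x - y‖ : ℝ) := by
    refine mul_left_cancel₀ (two_ne_zero' 𝕜) ?_
    rw [two_mul_vectorState_sub_apply]
    conv_lhs => rw [hpu, hqv]
    simp only [map_smul, swapOperator_apply_left hu huv, swapOperator_apply_right hv huv,
      inner_smul_left, inner_smul_right, inner_self_eq_norm_sq_to_K, hu, hv, RCLike.conj_ofReal]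
    push_cast
    ring
  calc ‖x + y‖ * ‖x - y‖ = ‖(vectorState 𝕜 x - vectorState 𝕜 y) (swapOperator 𝕜 u v)‖ := by
        rw [hvalue, RCLike.norm_ofReal, abs_of_nonneg (by positivity)]
    _ ≤ ‖vectorState 𝕜 x - vectorState 𝕜 y‖ * ‖swapOperator 𝕜 u v‖ :=
        ContinuousLinearMap.le_opNorm _ _
    _ ≤ ‖vectorState 𝕜 x - vectorState 𝕜 y‖ :=
        mul_le_of_le_one_right (by positivity) (norm_swapOperator_le_one hu hv huv)

lemma norm_vectorState_sub_of_inner_add_sub_eq_zero {x y : H} (h : ⟪x + y, x - y⟫_𝕜 = 0) :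
    ‖vectorState 𝕜 x - vectorState 𝕜 y‖ = ‖x + y‖ * ‖x - y‖ :=
  (norm_vectorState_sub_le x y).antisymm (norm_add_mul_norm_sub_le_norm_vectorState_sub h)

lemma inner_add_sub_eq_zero_of_inner_eq_ofReal {x y : H} (hxy : ‖x‖ = ‖y‖) {r : ℝ}
    (hr : ⟪x, y⟫_𝕜 = r) : ⟪x + y, x - y⟫_𝕜 = 0 := by
  have hr' : ⟪y, x⟫_𝕜 = r := by rw [← inner_conj_symm, hr, RCLike.conj_ofReal]
  rw [inner_add_left, inner_sub_right, inner_sub_right, hr, hr', inner_self_eq_norm_sq_to_K,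
    inner_self_eq_norm_sq_to_K, hxy]
  ring

end

theorem vector_state_norm_diff_general {H : Type*} [NormedAddCommGroup H]
    [InnerProductSpace ℂ H]
    (x y : H) (hx : ‖x‖ = 1) (hy : ‖y‖ = 1) :
    ‖(innerSL ℂ x).comp (ContinuousLinearMap.apply ℂ H x)
        - (innerSL ℂ y).comp (ContinuousLinearMap.apply ℂ H y)‖ ^ 2
      = 4 * (1 - ‖(inner ℂ x y : ℂ)‖ ^ 2) ∧
    1 - (1 / 4) * ‖(innerSL ℂ x).comp (ContinuousLinearMap.apply ℂ H x)
        - (innerSL ℂ y).comp (ContinuousLinearMap.apply ℂ H y)‖ ^ 2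
      = ‖(inner ℂ x y : ℂ)‖ ^ 2 := by
  simp only [← vectorState.eq_1]
  obtain ⟨α, hα, hαxy⟩ := RCLike.exists_norm_eq_mul_self ⟪x, y⟫_ℂ
  have hαy : ‖α • y‖ = 1 := by rw [norm_smul, hα, hy, one_mul]
  have hinner : ⟪x, α • y⟫_ℂ = ‖⟪x, y⟫_ℂ‖ := (inner_smul_right _ _ _).trans hαxy.symm
  have hnorm : ‖vectorState ℂ x - vectorState ℂ y‖ = ‖x + α • y‖ * ‖x - α • y‖ := by
    rw [← vectorState_smul_of_norm_eq_one hα y]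
    exact norm_vectorState_sub_of_inner_add_sub_eq_zero
      (inner_add_sub_eq_zero_of_inner_eq_ofReal (hx.trans hαy.symm) hinner)
  have key : ‖vectorState ℂ x - vectorState ℂ y‖ ^ 2 = 4 * (1 - ‖⟪x, y⟫_ℂ‖ ^ 2) := by
    rw [hnorm, mul_pow, norm_add_sq (𝕜 := ℂ), norm_sub_sq (𝕜 := ℂ), hx, hαy, hinner,
      RCLike.re_to_complex, Complex.ofReal_re]
    ring
  exact ⟨key, by rw [key]; ring⟩

/-- For unit vectors `x, y` of a complex Hilbert space, the vector states
`ω_x : A ↦ ⟨x, A x⟩` and `ω_y : A ↦ ⟨y, A y⟩` on `B(H)` satisfy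
`‖ω_x − ω_y‖² = 4(1 − |⟨x,y⟩|²)`; equivalently `1 − ¼‖ω_x − ω_y‖² = |⟨x,y⟩|²`. -/
theorem vector_state_norm_diff {H : Type*} [NormedAddCommGroup H]
    [InnerProductSpace ℂ H] [CompleteSpace H]
    (x y : H) (hx : ‖x‖ = 1) (hy : ‖y‖ = 1) :
    ‖(innerSL ℂ x).comp (ContinuousLinearMap.apply ℂ H x)
        - (innerSL ℂ y).comp (ContinuousLinearMap.apply ℂ H y)‖ ^ 2
      = 4 * (1 - ‖(inner ℂ x y : ℂ)‖ ^ 2) ∧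
    1 - (1 / 4) * ‖(innerSL ℂ x).comp (ContinuousLinearMap.apply ℂ H x)
        - (innerSL ℂ y).comp (ContinuousLinearMap.apply ℂ H y)‖ ^ 2
      = ‖(inner ℂ x y : ℂ)‖ ^ 2 :=
  vector_state_norm_diff_general x y hx hy
end

section
/- Let V be a real vector space equipped with two bilinear maps ∘ and [·,·] : V × V → V such that ∘ is symmetric, [·,·] is antisymmetric and satisfies the Jacobi identity, the Leibniz rule [a, b∘c] = [a,b]∘c + b∘[a,c] holds, and the associator identity (a∘b)∘c − a∘(b∘c) = ¼·[[a,c],b] holds for all a,b,c ∈ V (i.e., V is a Jordan–Lie algebra with k = ¼). Define a product on V × V (the complexification, with (a,b) representing a + ib) by (a,b)·(c,d) = (a∘c − b∘d + ½[a,d] + ½[b,c], a∘d + b∘c − ½[a,c] + ½[b,d]). Then this product is associative. -/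
/-!
The product is the `ℂ`-bilinear extension of `a·c = a∘c − ½ i [a,c]`: it commutes with
multiplication by `i` in each argument, and every element is `a + i b` with `a, b` real. By
trilinearity, associativity therefore reduces to real `a, c, e`. There the real part of
`(a·c)·e = a·(c·e)` is the associator identity combined with the Jacobi identity, and the
imaginary part is the Leibniz rule applied to `[a, c∘e]` and `[e, a∘c]`.
-/

theorem assoc_of_assoc_on_real_form {R M N : Type*} [CommSemiring R] [AddCommMonoid M]
    [Module R M] (μ : M →ₗ[R] M →ₗ[R] M) (J : M →ₗ[R] M) (ι : N → M)
    (hleft : ∀ x y, μ (J x) y = J (μ x y)) (hright : ∀ x y, μ x (J y) = J (μ x y))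
    (hspan : ∀ x, ∃ a b, x = ι a + J (ι b))
    (hreal : ∀ a b c, μ (μ (ι a) (ι b)) (ι c) = μ (ι a) (μ (ι b) (ι c))) :
    ∀ x y z, μ (μ x y) z = μ x (μ y z) := by
  intro x y z
  obtain ⟨a, b, rfl⟩ := hspan x
  obtain ⟨c, d, rfl⟩ := hspan y
  obtain ⟨e, f, rfl⟩ := hspan z
  simp only [map_add, LinearMap.add_apply, hleft, hright, hreal]

section
variable {V : Type*} [AddCommGroup V] [Module ℝ V]

def timesI : V × V →ₗ[ℝ] V × V := (-LinearMap.snd ℝ V V).prod (LinearMap.fst ℝ V V)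

@[simp] lemma timesI_apply (a b : V) : timesI (a, b) = (-b, a) := rfl

noncomputable def complexMul (o l : V →ₗ[ℝ] V →ₗ[ℝ] V) : V × V →ₗ[ℝ] V × V →ₗ[ℝ] V × V :=
  LinearMap.mk₂ ℝ (fun x y =>
      (o x.1 y.1 - o x.2 y.2 + (1 / 2 : ℝ) • l x.1 y.2 + (1 / 2 : ℝ) • l x.2 y.1,
       o x.1 y.2 + o x.2 y.1 - (1 / 2 : ℝ) • l x.1 y.1 + (1 / 2 : ℝ) • l x.2 y.2))
    (fun _ _ _ => by
      ext <;> simp only [Prod.fst_add, Prod.snd_add, map_add, LinearMap.add_apply] <;> module)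
    (fun _ _ _ => by
      ext <;> simp only [Prod.smul_fst, Prod.smul_snd, map_smul, LinearMap.smul_apply] <;> module)
    (fun _ _ _ => by ext <;> simp only [Prod.fst_add, Prod.snd_add, map_add] <;> module)
    (fun _ _ _ => by ext <;> simp only [Prod.smul_fst, Prod.smul_snd, map_smul] <;> module)

variable (o l : V →ₗ[ℝ] V →ₗ[ℝ] V)

lemma complexMul_apply (a b c d : V) : complexMul o l (a, b) (c, d) =
    (o a c - o b d + (1 / 2 : ℝ) • l a d + (1 / 2 : ℝ) • l b c,
     o a d + o b c - (1 / 2 : ℝ) • l a c + (1 / 2 : ℝ) • l b d) := rfl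

lemma complexMul_timesI_left (x y : V × V) :
    complexMul o l (timesI x) y = timesI (complexMul o l x y) := by
  obtain ⟨a, b⟩ := x
  obtain ⟨c, d⟩ := y
  ext <;> simp only [timesI_apply, complexMul_apply, map_neg, LinearMap.neg_apply] <;> module

lemma complexMul_timesI_right (x y : V × V) :
    complexMul o l x (timesI y) = timesI (complexMul o l x y) := by
  obtain ⟨a, b⟩ := x
  obtain ⟨c, d⟩ := y
  ext <;> simp only [timesI_apply, complexMul_apply, map_neg] <;> module

lemma eq_inl_add_timesI_inl (x : V × V) :
    x = LinearMap.inl ℝ V V x.1 + timesI (LinearMap.inl ℝ V V x.2) := by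
  ext <;> simp

lemma jordanLie_assoc_fst_part (hanti : ∀ a b : V, l a b = -l b a)
    (hjacobi : ∀ a b c : V, l a (l b c) + l b (l c a) + l c (l a b) = 0)
    (hassoc : ∀ a b c : V, o (o a b) c - o a (o b c) = (1 / 4 : ℝ) • l (l a c) b)
    (a c e : V) :
    o (o a c) e - (1 / 4 : ℝ) • l (l a c) e = o a (o c e) - (1 / 4 : ℝ) • l a (l c e) := by
  have hce : l c (l a e) = -l c (l e a) := by rw [hanti a e, map_neg]
  linear_combination (norm := module) hassoc a c e + (1 / 4 : ℝ) • hjacobi a c e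
    - (1 / 4 : ℝ) • hanti (l a c) e + (1 / 4 : ℝ) • hanti (l a e) c - (1 / 4 : ℝ) • hce

lemma jordanLie_assoc_snd_part (hsymm : ∀ a b : V, o a b = o b a)
    (hanti : ∀ a b : V, l a b = -l b a)
    (hleibniz : ∀ a b c : V, l a (o b c) = o (l a b) c + o b (l a c)) (a c e : V) :
    o (l a c) e + l (o a c) e = o a (l c e) + l a (o c e) := by
  have hc : o a (l e c) = -o a (l c e) := by rw [hanti e c, map_neg]
  have ha : o (l e a) c = -o c (l a e) := by
    rw [hanti e a, map_neg, LinearMap.neg_apply, hsymm]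
  linear_combination (norm := module) hanti (o a c) e - hleibniz e a c - hleibniz a c e - hc - ha

lemma complexMul_inl_assoc (hsymm : ∀ a b : V, o a b = o b a)
    (hanti : ∀ a b : V, l a b = -l b a)
    (hjacobi : ∀ a b c : V, l a (l b c) + l b (l c a) + l c (l a b) = 0)
    (hleibniz : ∀ a b c : V, l a (o b c) = o (l a b) c + o b (l a c))
    (hassoc : ∀ a b c : V, o (o a b) c - o a (o b c) = (1 / 4 : ℝ) • l (l a c) b) (a c e : V) :
    complexMul o l (complexMul o l (LinearMap.inl ℝ V V a) (LinearMap.inl ℝ V V c))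
        (LinearMap.inl ℝ V V e) =
      complexMul o l (LinearMap.inl ℝ V V a)
        (complexMul o l (LinearMap.inl ℝ V V c) (LinearMap.inl ℝ V V e)) := by
  simp only [LinearMap.inl_apply, complexMul_apply, map_zero, LinearMap.zero_apply, map_sub,
    map_add, map_smul, LinearMap.sub_apply, LinearMap.add_apply, LinearMap.smul_apply]
  ext
  · linear_combination (norm := module) jordanLie_assoc_fst_part o l hanti hjacobi hassoc a c e
  · linear_combination (norm := module)
      (-1 / 2 : ℝ) • jordanLie_assoc_snd_part o l hsymm hanti hleibniz a c e

end

/-- In a Jordan–Lie algebra with `k = ¼` (a symmetric bilinear Jordan product `∘`, an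
antisymmetric bilinear bracket `[·,·]` satisfying the Jacobi identity, the Leibniz rule,
and the associator identity `(a∘b)∘c − a∘(b∘c) = ¼[[a,c],b]`), the product on the
complexification `V × V` given by
`(a,b)·(c,d) = (a∘c − b∘d + ½[a,d] + ½[b,c], a∘d + b∘c − ½[a,c] + ½[b,d])`
is associative. -/
theorem jordanLie_complexification_assoc {V : Type*} [AddCommGroup V] [Module ℝ V]
    (o : V →ₗ[ℝ] V →ₗ[ℝ] V) (l : V →ₗ[ℝ] V →ₗ[ℝ] V)
    (hsymm : ∀ a b : V, o a b = o b a)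
    (hanti : ∀ a b : V, l a b = -l b a)
    (hjacobi : ∀ a b c : V, l a (l b c) + l b (l c a) + l c (l a b) = 0)
    (hleibniz : ∀ a b c : V, l a (o b c) = o (l a b) c + o b (l a c))
    (hassoc : ∀ a b c : V, o (o a b) c - o a (o b c) = (1 / 4 : ℝ) • l (l a c) b)
    (mul : V × V → V × V → V × V)
    (hmul : ∀ a b c d : V, mul (a, b) (c, d) =
      (o a c - o b d + (1 / 2 : ℝ) • l a d + (1 / 2 : ℝ) • l b c,
       o a d + o b c - (1 / 2 : ℝ) • l a c + (1 / 2 : ℝ) • l b d)) :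
    ∀ x y z : V × V, mul (mul x y) z = mul x (mul y z) := by
  obtain rfl : mul = fun x y => complexMul o l x y := by
    funext ⟨a, b⟩ ⟨c, d⟩
    exact hmul a b c d
  exact assoc_of_assoc_on_real_form (complexMul o l) timesI (LinearMap.inl ℝ V V)
    (complexMul_timesI_left o l) (complexMul_timesI_right o l)
    (fun x => ⟨x.1, x.2, eq_inl_add_timesI_inl x⟩)
    (complexMul_inl_assoc o l hsymm hanti hjacobi hleibniz hassoc)
end

section
/- Let H be a complex Hilbert space and let R, S, Q be closed subspaces of H with R ⊆ S and R ⊆ Q. Then (closure(S + Q)) ∩ R^⊥ = closure((S ∩ R^⊥) + (Q ∩ R^⊥)); in lattice notation for the orthomodular lattice of closed subspaces of H: (S ∨ Q) ∧ R^⊥ = (S ∧ R^⊥) ∨ (Q ∧ R^⊥). -/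
/-! The orthogonal projection onto `Rᗮ` is `1 - P_R`; when `R ≤ S` it maps `S` into `S ⊓ Rᗮ`.
Being continuous, it maps the closure of `S ⊔ Q` into the closure of `S ⊓ Rᗮ ⊔ Q ⊓ Rᗮ`, and it
fixes every vector of `Rᗮ`. -/

namespace Submodule

variable {𝕜 E : Type*} [RCLike 𝕜] [NormedAddCommGroup E] [InnerProductSpace 𝕜 E]
  {K S Q : Submodule 𝕜 E} [K.HasOrthogonalProjection]

theorem starProjection_orthogonal_mem_inf (hKS : K ≤ S) {x : E} (hx : x ∈ S) :
    Kᗮ.starProjection x ∈ S ⊓ Kᗮ := by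
  refine ⟨?_, Kᗮ.starProjection_apply_mem x⟩
  rw [starProjection_orthogonal_val]
  exact S.sub_mem hx (hKS (K.starProjection_apply_mem x))

theorem map_starProjection_orthogonal_sup_le (hKS : K ≤ S) (hKQ : K ≤ Q) :
    (S ⊔ Q).map (Kᗮ.starProjection : E →ₗ[𝕜] E) ≤ S ⊓ Kᗮ ⊔ Q ⊓ Kᗮ := by
  rw [map_sup]
  exact sup_le_sup (map_le_iff_le_comap.2 fun _ ↦ starProjection_orthogonal_mem_inf hKS)
    (map_le_iff_le_comap.2 fun _ ↦ starProjection_orthogonal_mem_inf hKQ)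

theorem topologicalClosure_sup_inf_orthogonal (hKS : K ≤ S) (hKQ : K ≤ Q) :
    (S ⊔ Q).topologicalClosure ⊓ Kᗮ = (S ⊓ Kᗮ ⊔ Q ⊓ Kᗮ).topologicalClosure := by
  refine le_antisymm ?_ ?_
  · rintro x ⟨hx, hxK⟩
    rw [← starProjection_eq_self_iff.2 hxK]
    exact topologicalClosure_mono (map_starProjection_orthogonal_sup_le hKS hKQ)
      (topologicalClosure_map Kᗮ.starProjection _ (mem_map_of_mem hx))
  · exact le_inf (topologicalClosure_mono (sup_le_sup inf_le_left inf_le_left))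
      (topologicalClosure_minimal _ (sup_le inf_le_right inf_le_right) K.isClosed_orthogonal)

end Submodule

theorem closed_subspace_distributivity_general {H : Type*} [NormedAddCommGroup H]
    [InnerProductSpace ℂ H] [CompleteSpace H]
    (R S Q : Submodule ℂ H)
    (hR : IsClosed (R : Set H))
    (hRS : R ≤ S) (hRQ : R ≤ Q) :
    (S ⊔ Q).topologicalClosure ⊓ Rᗮ = ((S ⊓ Rᗮ) ⊔ (Q ⊓ Rᗮ)).topologicalClosure := by
  have : CompleteSpace R := hR.completeSpace_coe
  exact Submodule.topologicalClosure_sup_inf_orthogonal hRS hRQ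

/-- In the orthomodular lattice of closed subspaces of a complex Hilbert space, if
`R ⊆ S` and `R ⊆ Q` then `(S ∨ Q) ∧ R^⊥ = (S ∧ R^⊥) ∨ (Q ∧ R^⊥)`, where the join is
the closure of the sum and the meet is the intersection. -/
theorem closed_subspace_distributivity {H : Type*} [NormedAddCommGroup H]
    [InnerProductSpace ℂ H] [CompleteSpace H]
    (R S Q : Submodule ℂ H)
    (hR : IsClosed (R : Set H)) (hS : IsClosed (S : Set H)) (hQ : IsClosed (Q : Set H))
    (hRS : R ≤ S) (hRQ : R ≤ Q) :
    (S ⊔ Q).topologicalClosure ⊓ Rᗮ = ((S ⊓ Rᗮ) ⊔ (Q ⊓ Rᗮ)).topologicalClosure :=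
  closed_subspace_distributivity_general R S Q hR hRS hRQ
end
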